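/- The Mercator map F : ℝ × S^{n-1} → S^n, F(t,x) = (tanh t, x/cosh t), is a conformal diffeomorphism onto its image: the pullback under F of the round metric on S^n equals (1/cosh²t)·(dt² + g_round), where g_round is the round metric on S^{n-1}. -/

import Mathlib

/-!
Write `F(t, x) = ι(tanh t, (cosh t)⁻¹ • x)`, where `ι : ℝ × ℝⁿ → ℝⁿ⁺¹` prepends a coordinate
and is an isometry. Its differential is
`dF(s, v) = ι(s / cosh² t, (cosh t)⁻¹ • v - (s sinh t / cosh² t) • x)`. For `v ⟂ x` and `‖x‖ = 1`
the two vectors in the second slot are orthogonal, so Pythagoras gives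
`‖dF(s, v)‖² = (s² + s² sinh² t) / cosh⁴ t + ‖v‖² / cosh² t = (s² + ‖v‖²) / cosh² t`.
-/

open scoped RealInnerProductSpace

/-- The Mercator map `F(t,x) = (tanh t, x / cosh t)`. -/
noncomputable def mercator (n : ℕ) :
    ℝ × EuclideanSpace ℝ (Fin n) → EuclideanSpace ℝ (Fin (n + 1)) :=
  fun p => WithLp.toLp 2 (Fin.cons (Real.tanh p.1) (fun i => p.2 i / Real.cosh p.1) :
    ∀ _ : Fin (n + 1), ℝ)

open Real ContinuousLinearMap

theorem Real.hasDerivAt_tanh (t : ℝ) : HasDerivAt tanh (1 / cosh t ^ 2) t := by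
  have h := ((hasDerivAt_sinh t).div (hasDerivAt_cosh t) (cosh_pos t).ne').congr_of_eventuallyEq
    (.of_forall tanh_eq_sinh_div_cosh)
  rwa [← sq, ← sq, cosh_sq_sub_sinh_sq] at h

namespace EuclideanSpace

variable {𝕜 : Type*} [RCLike 𝕜] {n : ℕ}

variable (𝕜 n) in
noncomputable def consL : 𝕜 × EuclideanSpace 𝕜 (Fin n) →L[𝕜] EuclideanSpace 𝕜 (Fin (n + 1)) :=
  LinearMap.toContinuousLinearMap
    { toFun := fun p => WithLp.toLp 2 (Fin.cons p.1 p.2)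
      map_add' := fun p q => by ext i; cases i using Fin.cases <;> simp
      map_smul' := fun c p => by ext i; cases i using Fin.cases <;> simp }

@[simp]
theorem consL_apply (a : 𝕜) (y : EuclideanSpace 𝕜 (Fin n)) :
    consL 𝕜 n (a, y) = WithLp.toLp 2 (Fin.cons a y) := rfl

theorem norm_consL_sq (a : 𝕜) (y : EuclideanSpace 𝕜 (Fin n)) :
    ‖consL 𝕜 n (a, y)‖ ^ 2 = ‖a‖ ^ 2 + ‖y‖ ^ 2 := by
  simp [EuclideanSpace.norm_sq_eq, Fin.sum_univ_succ]

end EuclideanSpace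

open EuclideanSpace

theorem mercator_eq_consL (n : ℕ) :
    mercator n = fun p => consL ℝ n (tanh p.1, (cosh p.1)⁻¹ • p.2) := by
  ext p i
  cases i using Fin.cases <;> simp [mercator, div_eq_inv_mul]

theorem hasFDerivAt_mercator (n : ℕ) (t : ℝ) (x : EuclideanSpace ℝ (Fin n)) :
    HasFDerivAt (mercator n)
      (consL ℝ n ∘L ((1 / cosh t ^ 2) • fst ℝ ℝ _).prod
        ((cosh t)⁻¹ • snd ℝ ℝ _ + ((-sinh t / cosh t ^ 2) • fst ℝ ℝ _).smulRight x)) (t, x) := by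
  have hfst : HasFDerivAt (Prod.fst : ℝ × EuclideanSpace ℝ (Fin n) → ℝ) (fst ℝ ℝ _) (t, x) :=
    hasFDerivAt_fst
  have htanh := (hasDerivAt_tanh t).comp_hasFDerivAt (t, x) hfst
  have hsech := ((hasDerivAt_cosh t).inv (cosh_pos t).ne').comp_hasFDerivAt (t, x) hfst
  rw [mercator_eq_consL]
  exact (consL ℝ n).hasFDerivAt.comp (t, x) (htanh.prodMk (hsech.smul hasFDerivAt_snd))

theorem fderiv_mercator_apply (n : ℕ) (t : ℝ) (x : EuclideanSpace ℝ (Fin n)) (s : ℝ)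
    (v : EuclideanSpace ℝ (Fin n)) :
    fderiv ℝ (mercator n) (t, x) (s, v) =
      consL ℝ n (s / cosh t ^ 2, (cosh t)⁻¹ • v - (s * sinh t / cosh t ^ 2) • x) := by
  rw [(hasFDerivAt_mercator n t x).fderiv]
  simp only [coe_comp, Function.comp_apply, prod_apply, FunLike.coe_smul, coe_fst', add_apply,
    coe_snd', smulRight_apply, Pi.smul_apply, smul_eq_mul]
  congr 2
  · ring
  · rw [sub_eq_add_neg, ← neg_smul]
    congr 2
    ring

theorem norm_fderiv_mercator_sq {n : ℕ} (t : ℝ) {x v : EuclideanSpace ℝ (Fin n)} (hx : ‖x‖ = 1)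
    (hxv : ⟪x, v⟫ = 0) (s : ℝ) :
    ‖fderiv ℝ (mercator n) (t, x) (s, v)‖ ^ 2 = 1 / cosh t ^ 2 * (s ^ 2 + ‖v‖ ^ 2) := by
  have horth : ⟪(cosh t)⁻¹ • v, (s * sinh t / cosh t ^ 2) • x⟫ = 0 := by
    rw [real_inner_smul_left, real_inner_smul_right, real_inner_comm, hxv, mul_zero, mul_zero]
  rw [fderiv_mercator_apply, norm_consL_sq, norm_sub_sq_real, horth, norm_smul, norm_smul, hx]
  simp only [Real.norm_eq_abs, mul_pow, sq_abs, mul_one]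
  have hcosh : 0 < cosh t := cosh_pos t
  field_simp
  linear_combination -s ^ 2 * cosh_sq t

/-- The Mercator map is conformal: at a point `(t,x)` with `‖x‖ = 1`, its
differential applied to a tangent vector `(s, v)` of `ℝ × S^{n-1}`
(i.e. `v ⟂ x`) has squared norm `(1/cosh²t)·(s² + ‖v‖²)`; that is, the
pullback of the round metric of `S^n` is `(1/cosh²t)(dt² + g_round)`. -/
theorem stmt9 (n : ℕ) (t : ℝ) (x : EuclideanSpace ℝ (Fin n)) (hx : ‖x‖ = 1) :
    ∃ D : ℝ × EuclideanSpace ℝ (Fin n) →L[ℝ] EuclideanSpace ℝ (Fin (n + 1)),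
      HasFDerivAt (mercator n) D (t, x) ∧
      ∀ (s : ℝ) (v : EuclideanSpace ℝ (Fin n)), ⟪x, v⟫ = 0 →
        ‖D (s, v)‖ ^ 2 = (1 / Real.cosh t ^ 2) * (s ^ 2 + ‖v‖ ^ 2) :=
  ⟨fderiv ℝ (mercator n) (t, x), (hasFDerivAt_mercator n t x).differentiableAt.hasFDerivAt,
    fun s _ hxv => norm_fderiv_mercator_sq t hx hxv s⟩
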